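/- Let n ≥ 2. For every positive integer m and every pair of m-tuples (P₁, …, Pₘ) and (Q₁, …, Qₘ) of pairwise distinct points of the unit sphere Sⁿ ⊂ ℝⁿ⁺¹, there exists a birational diffeomorphism φ of Sⁿ such that φ(Pⱼ) = Qⱼ for every j = 1, …, m. In other words, for n > 1 the group of birational diffeomorphisms of Sⁿ acts infinitely transitively on Sⁿ. -/

import Mathlib

/-- The unit sphere `Sⁿ` in euclidean `ℝⁿ⁺¹`. -/
def unitSphere (n : ℕ) : Set (EuclideanSpace ℝ (Fin (n + 1))) := {x | ‖x‖ = 1}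

/-- `φ` is given on `Sⁿ` by polynomial fractions `Fᵢ/G` in the ambient coordinates,
where the denominator `G` vanishes at no point of `Sⁿ`. -/
def HasRegularRep (n : ℕ)
    (φ : EuclideanSpace ℝ (Fin (n + 1)) → EuclideanSpace ℝ (Fin (n + 1))) : Prop :=
  ∃ (F : Fin (n + 1) → MvPolynomial (Fin (n + 1)) ℝ) (G : MvPolynomial (Fin (n + 1)) ℝ),
    (∀ x ∈ unitSphere n, MvPolynomial.eval (fun i => x i) G ≠ 0) ∧
    ∀ x ∈ unitSphere n, ∀ i, φ x i =
      MvPolynomial.eval (fun i => x i) (F i) / MvPolynomial.eval (fun i => x i) G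

/-- A birational diffeomorphism of `Sⁿ`: a bijection of `Sⁿ` onto itself given on `Sⁿ` by
polynomial fractions with nonvanishing denominator, whose inverse bijection admits a
representation of the same form. -/
def IsBirationalDiffeo (n : ℕ)
    (φ : EuclideanSpace ℝ (Fin (n + 1)) → EuclideanSpace ℝ (Fin (n + 1))) : Prop :=
  Set.BijOn φ (unitSphere n) (unitSphere n) ∧ HasRegularRep n φ ∧
    ∃ ψ : EuclideanSpace ℝ (Fin (n + 1)) → EuclideanSpace ℝ (Fin (n + 1)),
      Set.InvOn ψ φ (unitSphere n) (unitSphere n) ∧ HasRegularRep n ψ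

/-!
For an orthonormal pair `e, f` and a function `τ`, the twist of `x` rotates the `(e, f)`-coordinates
of `x` by the rotation with rational parameter `τ (π x)`, where `π x = orthPart e f x` is the part
of `x` orthogonal to `e` and `f`; since `π` is unchanged by the twist, the twist by `-τ` inverts it.
The rational parametrization `((1 - t²)/(1 + t²), 2t/(1 + t²))` of the circle makes the twist by
a polynomial `τ` regular on the sphere. Taking `τ` to vanish at the projections of finitely many
points fixes them, and two twists move `a` to any `b` with `π a = π b`, `‖a‖ = ‖b‖`. Choosing
the plane to contain `b - a` but none of the `r - a` gives a map fixing the points `r` off the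
line `ab`; in general one passes through a point `c` of the sphere off the finitely many lines
joining `a` or `b` to a point to be fixed. Induction on the number of points concludes.
-/

noncomputable section

open Module Submodule MvPolynomial InnerProductSpace
open scoped RealInnerProductSpace

section RationalCircle

def ratCos (t : ℝ) : ℝ := (1 - t ^ 2) / (1 + t ^ 2)

def ratSin (t : ℝ) : ℝ := 2 * t / (1 + t ^ 2)

lemma ratCos_sq_add_ratSin_sq (t : ℝ) : ratCos t ^ 2 + ratSin t ^ 2 = 1 := by
  unfold ratCos ratSin
  field_simp
  ring

@[simp] lemma ratCos_zero : ratCos 0 = 1 := by norm_num [ratCos]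

@[simp] lemma ratSin_zero : ratSin 0 = 0 := by norm_num [ratSin]

@[simp] lemma ratCos_neg (t : ℝ) : ratCos (-t) = ratCos t := by simp [ratCos]

@[simp] lemma ratSin_neg (t : ℝ) : ratSin (-t) = -ratSin t := by simp [ratSin, neg_div]

lemma ratSin_div_one_add_ratCos (t : ℝ) : ratSin t / (1 + ratCos t) = t := by
  unfold ratCos ratSin
  field_simp
  ring

lemma ratCos_ratSin_of_ne_neg_one {c s : ℝ} (hcs : c ^ 2 + s ^ 2 = 1) (hc : c ≠ -1) :
    ratCos (s / (1 + c)) = c ∧ ratSin (s / (1 + c)) = s := by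
  have hc' : 1 + c ≠ 0 := fun h => hc (by linarith)
  have hden : 1 + (s / (1 + c)) ^ 2 = 2 / (1 + c) := by
    field_simp
    linear_combination hcs
  constructor
  · rw [ratCos, hden]
    field_simp
    linear_combination -hcs
  · rw [ratSin, hden]
    field_simp

/-- Two factors are needed: the half-turn `(-1, 0)` has no rational parameter. -/
lemma exists_ratCos_ratSin_mul {c s : ℝ} (hcs : c ^ 2 + s ^ 2 = 1) :
    ∃ t₁ t₂ : ℝ, ratCos t₂ * ratCos t₁ - ratSin t₂ * ratSin t₁ = c ∧
      ratSin t₂ * ratCos t₁ + ratCos t₂ * ratSin t₁ = s := by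
  by_cases hc : c = -1
  · have hs : s = 0 := by subst hc; nlinarith
    refine ⟨1, 1, ?_, ?_⟩ <;> norm_num [ratCos, ratSin, hc, hs]
  · obtain ⟨hc', hs'⟩ := ratCos_ratSin_of_ne_neg_one hcs hc
    exact ⟨0, s / (1 + c), by simp [hc'], by simp [hs']⟩

end RationalCircle

section PlaneRotation

variable {V : Type*} [NormedAddCommGroup V] [InnerProductSpace ℝ V]

def orthPart (e f x : V) : V := x - ⟪e, x⟫ • e - ⟪f, x⟫ • f

def planeRotate (e f : V) (c s : ℝ) (x : V) : V :=
  orthPart e f x + (c * ⟪e, x⟫ - s * ⟪f, x⟫) • e + (s * ⟪e, x⟫ + c * ⟪f, x⟫) • f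

def twist (e f : V) (τ : V → ℝ) (x : V) : V :=
  planeRotate e f (ratCos (τ (orthPart e f x))) (ratSin (τ (orthPart e f x))) x

variable {e f : V}

lemma orthonormal_pair_iff : Orthonormal ℝ ![e, f] ↔ ‖e‖ = 1 ∧ ‖f‖ = 1 ∧ ⟪e, f⟫ = 0 := by
  simp only [orthonormal_vecCons_iff, Matrix.cons_val_fin_one, forall_const,
    orthonormal_subsingleton_iff, and_congr_right_iff]
  tauto

lemma orthPart_sub (x y : V) : orthPart e f (x - y) = orthPart e f x - orthPart e f y := by
  simp only [orthPart, inner_sub_right, sub_smul]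
  abel

lemma orthPart_add_smul_add_smul (x : V) : orthPart e f x + ⟪e, x⟫ • e + ⟪f, x⟫ • f = x := by
  simp only [orthPart]
  abel

lemma inner_orthPart (h : Orthonormal ℝ ![e, f]) (x : V) :
    ⟪e, orthPart e f x⟫ = 0 ∧ ⟪f, orthPart e f x⟫ = 0 := by
  obtain ⟨he, hf, hef⟩ := orthonormal_pair_iff.mp h
  have hfe : ⟪f, e⟫ = 0 := by rwa [real_inner_comm]
  simp [orthPart, inner_sub_right, inner_smul_right, he, hf, hef, hfe]

lemma inner_planeRotate (h : Orthonormal ℝ ![e, f]) (c s : ℝ) (x : V) :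
    ⟪e, planeRotate e f c s x⟫ = c * ⟪e, x⟫ - s * ⟪f, x⟫ ∧
      ⟪f, planeRotate e f c s x⟫ = s * ⟪e, x⟫ + c * ⟪f, x⟫ := by
  obtain ⟨he, hf, hef⟩ := orthonormal_pair_iff.mp h
  have hfe : ⟪f, e⟫ = 0 := by rwa [real_inner_comm]
  obtain ⟨hpe, hpf⟩ := inner_orthPart h x
  simp [planeRotate, inner_add_right, inner_smul_right, he, hf, hef, hfe, hpe, hpf]

lemma orthPart_planeRotate (h : Orthonormal ℝ ![e, f]) (c s : ℝ) (x : V) :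
    orthPart e f (planeRotate e f c s x) = orthPart e f x := by
  obtain ⟨hre, hrf⟩ := inner_planeRotate h c s x
  rw [orthPart, hre, hrf, planeRotate]
  module

lemma norm_sq_eq_norm_sq_orthPart_add (h : Orthonormal ℝ ![e, f]) (x : V) :
    ‖x‖ ^ 2 = ‖orthPart e f x‖ ^ 2 + ⟪e, x⟫ ^ 2 + ⟪f, x⟫ ^ 2 := by
  obtain ⟨he, hf, hef⟩ := orthonormal_pair_iff.mp h
  have hfe : ⟪f, e⟫ = 0 := by rwa [real_inner_comm]
  obtain ⟨hpe, hpf⟩ := inner_orthPart h x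
  conv_lhs => rw [← orthPart_add_smul_add_smul (e := e) (f := f) x]
  rw [← real_inner_self_eq_norm_sq, ← real_inner_self_eq_norm_sq]
  simp only [inner_add_left, inner_add_right, inner_smul_left, inner_smul_right,
    real_inner_comm e (orthPart e f x), real_inner_comm f (orthPart e f x), hpe, hpf, hef, hfe,
    real_inner_self_eq_norm_sq, he, hf, RCLike.conj_to_real]
  ring

lemma eq_of_orthPart_eq {x y : V} (h₀ : orthPart e f x = orthPart e f y) (h₁ : ⟪e, x⟫ = ⟪e, y⟫)
    (h₂ : ⟪f, x⟫ = ⟪f, y⟫) : x = y := by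
  rw [← orthPart_add_smul_add_smul (e := e) (f := f) x,
    ← orthPart_add_smul_add_smul (e := e) (f := f) y, h₀, h₁, h₂]

lemma norm_planeRotate (h : Orthonormal ℝ ![e, f]) {c s : ℝ} (hcs : c ^ 2 + s ^ 2 = 1)
    (x : V) : ‖planeRotate e f c s x‖ = ‖x‖ := by
  obtain ⟨hre, hrf⟩ := inner_planeRotate h c s x
  have hsq := norm_sq_eq_norm_sq_orthPart_add h (planeRotate e f c s x)
  rw [orthPart_planeRotate h, hre, hrf] at hsq
  refine (sq_eq_sq₀ (norm_nonneg _) (norm_nonneg _)).mp ?_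
  rw [hsq, norm_sq_eq_norm_sq_orthPart_add h x]
  linear_combination (⟪e, x⟫ ^ 2 + ⟪f, x⟫ ^ 2) * hcs

lemma planeRotate_planeRotate (h : Orthonormal ℝ ![e, f]) (c₁ s₁ c₂ s₂ : ℝ) (x : V) :
    planeRotate e f c₂ s₂ (planeRotate e f c₁ s₁ x) =
      planeRotate e f (c₂ * c₁ - s₂ * s₁) (s₂ * c₁ + c₂ * s₁) x := by
  obtain ⟨hre, hrf⟩ := inner_planeRotate h c₁ s₁ x
  obtain ⟨hre₂, hrf₂⟩ := inner_planeRotate h c₂ s₂ (planeRotate e f c₁ s₁ x)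
  obtain ⟨hre', hrf'⟩ := inner_planeRotate h (c₂ * c₁ - s₂ * s₁) (s₂ * c₁ + c₂ * s₁) x
  apply eq_of_orthPart_eq (e := e) (f := f)
  · simp only [orthPart_planeRotate h]
  · rw [hre₂, hre', hre, hrf]; ring
  · rw [hrf₂, hrf', hre, hrf]; ring

lemma planeRotate_one_zero (x : V) : planeRotate e f 1 0 x = x := by
  simp only [planeRotate, one_mul, zero_mul, sub_zero, zero_add]
  exact orthPart_add_smul_add_smul x

lemma orthPart_eq_zero_iff (h : Orthonormal ℝ ![e, f]) {x : V} :
    orthPart e f x = 0 ↔ x ∈ span ℝ {e, f} := by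
  obtain ⟨he, hf, hef⟩ := orthonormal_pair_iff.mp h
  have hfe : ⟪f, e⟫ = 0 := by rwa [real_inner_comm]
  rw [mem_span_pair]
  constructor
  · intro h₀
    refine ⟨⟪e, x⟫, ⟪f, x⟫, ?_⟩
    simpa [h₀] using orthPart_add_smul_add_smul (e := e) (f := f) x
  · rintro ⟨a, b, rfl⟩
    simp [orthPart, inner_add_right, inner_smul_right, he, hf, hef, hfe]

lemma exists_planeRotate_eq (h : Orthonormal ℝ ![e, f]) {a b : V}
    (hab : orthPart e f a = orthPart e f b) (hnorm : ‖a‖ = ‖b‖) :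
    ∃ c s : ℝ, c ^ 2 + s ^ 2 = 1 ∧ planeRotate e f c s a = b := by
  have hr : ⟪e, a⟫ ^ 2 + ⟪f, a⟫ ^ 2 = ⟪e, b⟫ ^ 2 + ⟪f, b⟫ ^ 2 := by
    have ha := norm_sq_eq_norm_sq_orthPart_add h a
    have hb := norm_sq_eq_norm_sq_orthPart_add h b
    rw [hnorm, hab] at ha
    linarith
  by_cases hr0 : ⟪e, a⟫ ^ 2 + ⟪f, a⟫ ^ 2 = 0
  · refine ⟨1, 0, by norm_num, ?_⟩
    have hsq := fun x y : ℝ => add_eq_zero_iff_of_nonneg (sq_nonneg x) (sq_nonneg y)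
    obtain ⟨hea, hfa⟩ := (hsq _ _).mp hr0
    obtain ⟨heb, hfb⟩ := (hsq _ _).mp (hr ▸ hr0)
    rw [planeRotate_one_zero]
    exact eq_of_orthPart_eq hab (by simp_all) (by simp_all)
  · set r := ⟪e, a⟫ ^ 2 + ⟪f, a⟫ ^ 2 with hr_def
    set c := (⟪e, a⟫ * ⟪e, b⟫ + ⟪f, a⟫ * ⟪f, b⟫) / r
    set s := (⟪e, a⟫ * ⟪f, b⟫ - ⟪f, a⟫ * ⟪e, b⟫) / r
    obtain ⟨hre, hrf⟩ := inner_planeRotate h c s a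
    refine ⟨c, s, ?_, eq_of_orthPart_eq ((orthPart_planeRotate h c s a).trans hab) ?_ ?_⟩
    · simp only [c, s]
      field_simp
      linear_combination (-(⟪e, b⟫ ^ 2 + ⟪f, b⟫ ^ 2)) * hr_def - r * hr
    · rw [hre]
      simp only [c, s]
      field_simp
      linear_combination ⟪e, b⟫ * hr_def
    · rw [hrf]
      simp only [c, s]
      field_simp
      linear_combination ⟪f, b⟫ * hr_def

lemma orthPart_twist (h : Orthonormal ℝ ![e, f]) (τ : V → ℝ) (x : V) :
    orthPart e f (twist e f τ x) = orthPart e f x :=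
  orthPart_planeRotate h _ _ x

lemma norm_twist (h : Orthonormal ℝ ![e, f]) (τ : V → ℝ) (x : V) :
    ‖twist e f τ x‖ = ‖x‖ :=
  norm_planeRotate h (ratCos_sq_add_ratSin_sq _) x

lemma twist_eq_planeRotate {τ : V → ℝ} {x : V} {t : ℝ} (ht : τ (orthPart e f x) = t) :
    twist e f τ x = planeRotate e f (ratCos t) (ratSin t) x := by
  rw [twist, ht]

lemma twist_eq_self {τ : V → ℝ} {x : V} (hx : τ (orthPart e f x) = 0) : twist e f τ x = x := by
  rw [twist_eq_planeRotate hx, ratCos_zero, ratSin_zero, planeRotate_one_zero]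

lemma twist_neg_twist (h : Orthonormal ℝ ![e, f]) (τ : V → ℝ) (x : V) :
    twist e f (-τ) (twist e f τ x) = x := by
  set t := τ (orthPart e f x)
  have ht : (-τ) (orthPart e f (twist e f τ x)) = -t := by
    rw [orthPart_twist h, Pi.neg_apply]
  rw [twist_eq_planeRotate ht, twist_eq_planeRotate rfl, planeRotate_planeRotate h, ratCos_neg,
    ratSin_neg]
  convert planeRotate_one_zero x using 2
  · linear_combination ratCos_sq_add_ratSin_sq t
  · ring

def twistPerm (h : Orthonormal ℝ ![e, f]) (τ : V → ℝ) : Equiv.Perm V where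
  toFun := twist e f τ
  invFun := twist e f (-τ)
  left_inv := twist_neg_twist h τ
  right_inv x := by simpa using twist_neg_twist h (-τ) x

lemma coe_twistPerm (h : Orthonormal ℝ ![e, f]) (τ : V → ℝ) : ⇑(twistPerm h τ) = twist e f τ :=
  rfl

lemma coe_twistPerm_symm (h : Orthonormal ℝ ![e, f]) (τ : V → ℝ) :
    ⇑(twistPerm h τ).symm = twist e f (-τ) :=
  rfl

end PlaneRotation

section ChoiceOfPlane

variable {V : Type*} [NormedAddCommGroup V] [InnerProductSpace ℝ V]

lemma exists_notMem_span_pair (h3 : 3 ≤ finrank ℝ V) (w : V) {T : Set V} (hT : T.Finite) :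
    ∃ u, u ∉ ℝ ∙ w ∧ ∀ v ∈ T, u ∉ span ℝ {w, v} := by
  have : FiniteDimensional ℝ V := Module.finite_of_finrank_pos (by omega)
  have hproper : ∀ v, span ℝ {w, v} ≠ ⊤ := fun v htop => by
    have := finrank_range_le_card (R := ℝ) ![w, v]
    rw [Matrix.range_cons_cons_empty, Set.finrank, htop, finrank_top, Fintype.card_fin] at this
    omega
  -- `v = w` accounts for the line `ℝ ∙ w = span ℝ {w, w}`
  obtain ⟨u, hu⟩ : ∃ u, ∀ v ∈ insert w T, u ∉ span ℝ {w, v} := by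
    have := (hT.insert w).to_subtype
    by_contra! hcover
    obtain ⟨v, hv⟩ := Subspace.exists_eq_top_of_iUnion_eq_univ
      (p := fun v : ↥(insert w T) => span ℝ {w, (v : V)}) <| Set.eq_univ_of_forall fun u => by
        obtain ⟨v, hv, huv⟩ := hcover u
        exact Set.mem_iUnion.mpr ⟨⟨v, hv⟩, huv⟩
    exact hproper v hv
  refine ⟨u, ?_, fun v hv => hu v (Set.mem_insert_of_mem w hv)⟩
  simpa using hu w (Set.mem_insert w T)

lemma exists_orthonormal_pair_mem_span (h3 : 3 ≤ finrank ℝ V) {w : V} (hw : w ≠ 0) {T : Set V}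
    (hT : T.Finite) (hTw : ∀ v ∈ T, v ∉ ℝ ∙ w) :
    ∃ e f : V, Orthonormal ℝ ![e, f] ∧ w ∈ span ℝ {e, f} ∧ ∀ v ∈ T, v ∉ span ℝ {e, f} := by
  obtain ⟨u, huw, huT⟩ := exists_notMem_span_pair h3 w hT
  have hind : LinearIndependent ℝ ![w, u] := by
    rw [LinearIndependent.pair_iff' hw]
    exact fun a hau => huw (hau ▸ smul_mem _ a (mem_span_singleton_self w))
  set g := gramSchmidtNormed ℝ ![w, u]
  have hg : ![g 0, g 1] = g := by ext i; fin_cases i <;> rfl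
  have hspan : span ℝ {g 0, g 1} = span ℝ {w, u} := by
    rw [← Matrix.range_cons_cons_empty (u := ![]), hg, span_gramSchmidtNormed_range,
      span_gramSchmidt, Matrix.range_cons_cons_empty]
  refine ⟨g 0, g 1, by rw [hg]; exact gramSchmidtNormed_orthonormal hind,
    hspan ▸ subset_span (by simp), fun v hv hvspan => huT v hv ?_⟩
  rw [hspan, Set.pair_comm] at hvspan
  rw [Set.pair_comm]
  exact mem_span_insert_exchange hvspan (hTw v hv)

end ChoiceOfPlane

section LinesAndSpheres

variable {V : Type*} [NormedAddCommGroup V] [InnerProductSpace ℝ V]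

lemma infinite_setOf_norm_eq_one {e f : V} (h : Orthonormal ℝ ![e, f]) :
    {x : V | ‖x‖ = 1}.Infinite := by
  obtain ⟨he, -, hef⟩ := orthonormal_pair_iff.mp h
  set γ : ℝ → V := fun t => planeRotate e f (ratCos t) (ratSin t) e
  have hγ : ∀ t, ⟪e, γ t⟫ = ratCos t ∧ ⟪f, γ t⟫ = ratSin t := fun t => by
    obtain ⟨hre, hrf⟩ := inner_planeRotate h (ratCos t) (ratSin t) e
    rw [hre, hrf, real_inner_self_eq_norm_sq, he, real_inner_comm, hef]
    constructor <;> ring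
  refine Set.infinite_of_injective_forall_mem (f := γ) (fun t₁ t₂ ht => ?_)
    fun t => (norm_planeRotate h (ratCos_sq_add_ratSin_sq t) e).trans he
  simpa only [(hγ _).1, (hγ _).2, ratSin_div_one_add_ratCos] using
    congrArg (fun x => ⟪f, x⟫ / (1 + ⟪e, x⟫)) ht

lemma finite_setOf_norm_eq_one_mem_line {a r : V} (ha : ‖a‖ = 1) (har : a ≠ r) :
    {c : V | ‖c‖ = 1 ∧ c ∈ line[ℝ, a, r]}.Finite := by
  have hd : ‖r - a‖ ≠ 0 := norm_ne_zero_iff.mpr (sub_ne_zero.mpr har.symm)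
  refine ((Set.toFinite {0, -2 * ⟪a, r - a⟫ / ‖r - a‖ ^ 2}).image
    fun t => AffineMap.lineMap a r t).subset ?_
  rintro c ⟨hc, hline⟩
  obtain ⟨t, rfl⟩ := mem_affineSpan_pair_iff_exists_lineMap_eq.mp hline
  refine ⟨t, ?_, rfl⟩
  rw [AffineMap.lineMap_apply, vsub_eq_sub, vadd_eq_add, ← sq_eq_sq₀ (norm_nonneg _) zero_le_one,
    add_comm, norm_add_sq_real, norm_smul, mul_pow, inner_smul_right, ha, Real.norm_eq_abs,
    sq_abs] at hc
  have : t * (t * ‖r - a‖ ^ 2 + 2 * ⟪a, r - a⟫) = 0 := by linear_combination hc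
  rcases mul_eq_zero.mp this with ht | ht
  · exact Or.inl ht
  · simp only [Set.mem_insert_iff, Set.mem_singleton_iff]
    right
    rw [eq_div_iff (pow_ne_zero 2 hd)]
    linarith

lemma mem_line_of_mem_line {p q r : V} (h : r ∈ line[ℝ, p, q]) (hrp : r ≠ p) :
    q ∈ line[ℝ, p, r] :=
  (collinear_insert_of_mem_affineSpan_pair h).mem_affineSpan_of_mem_of_ne (by simp) (by simp)
    (by simp) hrp.symm

end LinesAndSpheres

local notation "𝔼" n:max => EuclideanSpace ℝ (Fin (n + 1))

section RegularFunctions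

variable {n : ℕ}

def IsRegularOn (S : Set (𝔼 n)) (φ : 𝔼 n → ℝ) : Prop :=
  ∃ p q : MvPolynomial (Fin (n + 1)) ℝ, (∀ x ∈ S, eval (fun i => x i) q ≠ 0) ∧
    ∀ x ∈ S, φ x = eval (fun i => x i) p / eval (fun i => x i) q

namespace IsRegularOn

variable {S : Set (𝔼 n)} {φ ψ : 𝔼 n → ℝ}

lemma congr (hφ : IsRegularOn S φ) (h : S.EqOn φ ψ) : IsRegularOn S ψ := by
  obtain ⟨p, q, hq, hpq⟩ := hφ
  exact ⟨p, q, hq, fun x hx => (h hx).symm.trans (hpq x hx)⟩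

lemma const (c : ℝ) : IsRegularOn S fun _ => c :=
  ⟨C c, 1, by simp, by simp⟩

lemma coord (i : Fin (n + 1)) : IsRegularOn S fun x => x i :=
  ⟨X i, 1, by simp, by simp⟩

lemma add (hφ : IsRegularOn S φ) (hψ : IsRegularOn S ψ) : IsRegularOn S fun x => φ x + ψ x := by
  obtain ⟨p₁, q₁, hq₁, h₁⟩ := hφ
  obtain ⟨p₂, q₂, hq₂, h₂⟩ := hψ
  refine ⟨p₁ * q₂ + p₂ * q₁, q₁ * q₂, fun x hx => ?_, fun x hx => ?_⟩
  · simpa using mul_ne_zero (hq₁ x hx) (hq₂ x hx)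
  · have hq₁x := hq₁ x hx
    have hq₂x := hq₂ x hx
    dsimp only
    rw [h₁ x hx, h₂ x hx]
    simp only [map_add, map_mul]
    field_simp

lemma mul (hφ : IsRegularOn S φ) (hψ : IsRegularOn S ψ) : IsRegularOn S fun x => φ x * ψ x := by
  obtain ⟨p₁, q₁, hq₁, h₁⟩ := hφ
  obtain ⟨p₂, q₂, hq₂, h₂⟩ := hψ
  refine ⟨p₁ * p₂, q₁ * q₂, fun x hx => ?_, fun x hx => ?_⟩
  · simpa using mul_ne_zero (hq₁ x hx) (hq₂ x hx)
  · dsimp only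
    rw [h₁ x hx, h₂ x hx, map_mul, map_mul, div_mul_div_comm]

lemma sub (hφ : IsRegularOn S φ) (hψ : IsRegularOn S ψ) : IsRegularOn S fun x => φ x - ψ x :=
  (hφ.add ((const (-1)).mul hψ)).congr fun x _ => by ring

lemma div (hφ : IsRegularOn S φ) (hψ : IsRegularOn S ψ) (hψ₀ : ∀ x ∈ S, ψ x ≠ 0) :
    IsRegularOn S fun x => φ x / ψ x := by
  obtain ⟨p₁, q₁, hq₁, h₁⟩ := hφ
  obtain ⟨p₂, q₂, hq₂, h₂⟩ := hψ
  have hp₂ : ∀ x ∈ S, eval (fun i => x i) p₂ ≠ 0 := fun x hx h0 =>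
    hψ₀ x hx (by rw [h₂ x hx, h0, zero_div])
  refine ⟨p₁ * q₂, q₁ * p₂, fun x hx => ?_, fun x hx => ?_⟩
  · simpa using mul_ne_zero (hq₁ x hx) (hp₂ x hx)
  · have hq₂x := hq₂ x hx
    dsimp only
    rw [h₁ x hx, h₂ x hx, map_mul, map_mul, div_div_div_eq, mul_comm (eval _ q₁)]

lemma eval (p : MvPolynomial (Fin (n + 1)) ℝ) {φ : Fin (n + 1) → 𝔼 n → ℝ}
    (hφ : ∀ i, IsRegularOn S (φ i)) :
    IsRegularOn S fun x => MvPolynomial.eval (fun i => φ i x) p := by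
  induction p using MvPolynomial.induction_on with
  | C c => exact (const c).congr fun x _ => by simp
  | add p q hp hq => exact (hp.add hq).congr fun x _ => by simp
  | mul_X p i hp => exact (hp.mul (hφ i)).congr fun x _ => by simp

lemma inner (v : 𝔼 n) : IsRegularOn S fun x => ⟪v, x⟫ :=
  (eval (∑ i, C (v i) * X i) coord).congr fun x _ => by
    simp [PiLp.inner_apply, mul_comm]

lemma ratCos (hφ : IsRegularOn S φ) : IsRegularOn S fun x => ratCos (φ x) := by
  refine (((const 1).sub (hφ.mul hφ)).div ((const 1).add (hφ.mul hφ)) fun x _ => ?_).congr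
    fun x _ => ?_
  · rw [← sq]; positivity
  · simp [_root_.ratCos, sq]

lemma ratSin (hφ : IsRegularOn S φ) : IsRegularOn S fun x => ratSin (φ x) := by
  refine (((const 2).mul hφ).div ((const 1).add (hφ.mul hφ)) fun x _ => ?_).congr
    fun x _ => ?_
  · rw [← sq]; positivity
  · simp [_root_.ratSin, sq]

end IsRegularOn

lemma hasRegularRep_iff {φ : 𝔼 n → 𝔼 n} :
    HasRegularRep n φ ↔ ∀ i, IsRegularOn (unitSphere n) fun x => φ x i := by
  constructor
  · rintro ⟨F, G, hG, hφ⟩ i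
    exact ⟨F i, G, hG, fun x hx => hφ x hx i⟩
  · intro hφ
    choose p q hq hpq using hφ
    refine ⟨fun i => p i * ∏ j ∈ Finset.univ.erase i, q j, ∏ j, q j, fun x hx => ?_,
      fun x hx i => ?_⟩
    · simpa [Finset.prod_ne_zero_iff] using fun j => hq j x hx
    · have hrest : ∏ j ∈ Finset.univ.erase i, MvPolynomial.eval (fun k => x k) (q j) ≠ 0 :=
        Finset.prod_ne_zero_iff.mpr fun j _ => hq j x hx
      rw [show φ x i = _ from hpq i x hx, map_mul, map_prod, map_prod,
        ← Finset.mul_prod_erase _ _ (Finset.mem_univ i), mul_div_mul_right _ _ hrest]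

lemma HasRegularRep.comp {φ ψ : 𝔼 n → 𝔼 n} (hφ : HasRegularRep n φ) (hψ : HasRegularRep n ψ)
    (hψS : Set.MapsTo ψ (unitSphere n) (unitSphere n)) : HasRegularRep n (φ ∘ ψ) := by
  obtain ⟨F, G, hG, hFG⟩ := hφ
  have hψi := hasRegularRep_iff.mp hψ
  refine hasRegularRep_iff.mpr fun i => ?_
  exact ((IsRegularOn.eval (F i) hψi).div (IsRegularOn.eval G hψi) fun x hx => hG _ (hψS hx))
    |>.congr fun x hx => (hFG _ (hψS hx) i).symm

lemma hasRegularRep_id : HasRegularRep n id :=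
  hasRegularRep_iff.mpr IsRegularOn.coord

lemma hasRegularRep_twist (e f : 𝔼 n) (g : MvPolynomial (Fin (n + 1)) ℝ) :
    HasRegularRep n (twist e f fun y => MvPolynomial.eval (fun i => y i) g) := by
  have horth : ∀ i, IsRegularOn (unitSphere n) fun x => orthPart e f x i := fun i =>
    ((IsRegularOn.coord i).sub ((IsRegularOn.inner e).mul (IsRegularOn.const (e i)))).sub
      ((IsRegularOn.inner f).mul (IsRegularOn.const (f i))) |>.congr fun x _ => by simp [orthPart]
  have ht := IsRegularOn.eval g horth
  have hc := ht.ratCos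
  have hs := ht.ratSin
  refine hasRegularRep_iff.mpr fun i => ?_
  exact (((horth i).add (((hc.mul (.inner e)).sub (hs.mul (.inner f))).mul (.const (e i)))).add
    (((hs.mul (.inner e)).add (hc.mul (.inner f))).mul (.const (f i)))).congr fun x _ => by
      simp [twist, planeRotate]

lemma exists_eval_eq_and_eval_eq_zero {w : 𝔼 n} {Z : Set (𝔼 n)} (hZ : Z.Finite) (hwZ : w ∉ Z)
    (t : ℝ) : ∃ g : MvPolynomial (Fin (n + 1)) ℝ,
      eval (fun i => w i) g = t ∧ ∀ z ∈ Z, eval (fun i => z i) g = 0 := by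
  set L : 𝔼 n → MvPolynomial (Fin (n + 1)) ℝ := fun z => ∑ i, C (w i - z i) * (X i - C (z i))
  have hL : ∀ z x : 𝔼 n, eval (fun i => x i) (L z) = ⟪w - z, x - z⟫ := fun z x => by
    simp [L, PiLp.inner_apply, mul_comm]
  have hLw : ∏ z ∈ hZ.toFinset, ⟪w - z, w - z⟫ ≠ 0 := Finset.prod_ne_zero_iff.mpr fun z hz =>
    inner_self_ne_zero.mpr (sub_ne_zero.mpr (ne_of_mem_of_not_mem (hZ.mem_toFinset.mp hz) hwZ).symm)
  refine ⟨C (t / ∏ z ∈ hZ.toFinset, ⟪w - z, w - z⟫) * ∏ z ∈ hZ.toFinset, L z, ?_, fun z hz => ?_⟩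
  · simp only [map_mul, map_prod, eval_C, hL]
    field_simp
  · rw [map_mul, map_prod]
    exact mul_eq_zero_of_right _ <| Finset.prod_eq_zero (hZ.mem_toFinset.mpr hz) <| by
      rw [hL, sub_self, inner_zero_right]

end RegularFunctions

section RegularNormPerms

variable {n : ℕ}

lemma mapsTo_unitSphere {φ : 𝔼 n → 𝔼 n} (hφ : ∀ x, ‖φ x‖ = ‖x‖) :
    Set.MapsTo φ (unitSphere n) (unitSphere n) :=
  fun x hx => (hφ x).trans hx

def regularNormPerms (n : ℕ) : Subgroup (Equiv.Perm (𝔼 n)) where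
  carrier := {φ | (∀ x, ‖φ x‖ = ‖x‖) ∧ HasRegularRep n φ ∧ HasRegularRep n φ.symm}
  mul_mem' := by
    rintro φ ψ ⟨hφ, hφr, hφs⟩ ⟨hψ, hψr, hψs⟩
    refine ⟨fun x => (hφ _).trans (hψ x), hφr.comp hψr (mapsTo_unitSphere hψ), ?_⟩
    have hφ' : ∀ x, ‖φ.symm x‖ = ‖x‖ := fun x => by rw [← hφ, φ.apply_symm_apply]
    exact hψs.comp hφs (mapsTo_unitSphere hφ')
  one_mem' := ⟨fun _ => rfl, hasRegularRep_id, hasRegularRep_id⟩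
  inv_mem' := by
    rintro φ ⟨hφ, hφr, hφs⟩
    exact ⟨fun x => by rw [← hφ]; exact congrArg norm (φ.apply_symm_apply x), hφs, hφr⟩

lemma mem_regularNormPerms_iff {φ : Equiv.Perm (𝔼 n)} : φ ∈ regularNormPerms n ↔
    (∀ x, ‖φ x‖ = ‖x‖) ∧ HasRegularRep n φ ∧ HasRegularRep n φ.symm :=
  Iff.rfl

lemma isBirationalDiffeo_of_mem_regularNormPerms {φ : Equiv.Perm (𝔼 n)}
    (hφ : φ ∈ regularNormPerms n) : IsBirationalDiffeo n φ := by
  have hφ' := inv_mem hφ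
  have hinv : Set.InvOn φ.symm φ (unitSphere n) (unitSphere n) :=
    ⟨fun x _ => φ.symm_apply_apply x, fun x _ => φ.apply_symm_apply x⟩
  exact ⟨hinv.bijOn (mapsTo_unitSphere hφ.1) (mapsTo_unitSphere hφ'.1), hφ.2.1, φ.symm, hinv,
    hφ.2.2⟩

lemma twistPerm_mem_regularNormPerms {e f : 𝔼 n} (h : Orthonormal ℝ ![e, f])
    (g : MvPolynomial (Fin (n + 1)) ℝ) :
    twistPerm h (fun y => eval (fun i => y i) g) ∈ regularNormPerms n := by
  have hneg : -(fun y : 𝔼 n => eval (fun i => y i) g) = fun y => eval (fun i => y i) (-g) := by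
    ext y
    simp
  rw [mem_regularNormPerms_iff, coe_twistPerm, coe_twistPerm_symm, hneg]
  exact ⟨norm_twist h _, hasRegularRep_twist e f g, hasRegularRep_twist e f (-g)⟩

end RegularNormPerms

section Transitivity

variable {n : ℕ}

lemma exists_mem_regularNormPerms_of_orthPart_eq {e f : 𝔼 n} (h : Orthonormal ℝ ![e, f])
    {R : Set (𝔼 n)} (hR : R.Finite) {a b : 𝔼 n} (hab : orthPart e f a = orthPart e f b)
    (hnorm : ‖a‖ = ‖b‖) (hRa : ∀ r ∈ R, orthPart e f r ≠ orthPart e f a) :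
    ∃ φ ∈ regularNormPerms n, (∀ r ∈ R, φ r = r) ∧ φ a = b := by
  obtain ⟨c, s, hcs, hrot⟩ := exists_planeRotate_eq h hab hnorm
  obtain ⟨t₁, t₂, hc, hs⟩ := exists_ratCos_ratSin_mul hcs
  have hZ := hR.image (orthPart e f)
  have haZ : orthPart e f a ∉ orthPart e f '' R := fun ⟨r, hr, hra⟩ => hRa r hr hra
  obtain ⟨g₁, hg₁a, hg₁R⟩ := exists_eval_eq_and_eval_eq_zero hZ haZ t₁
  obtain ⟨g₂, hg₂a, hg₂R⟩ := exists_eval_eq_and_eval_eq_zero hZ haZ t₂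
  set τ₁ : 𝔼 n → ℝ := fun y => eval (fun i => y i) g₁
  set τ₂ : 𝔼 n → ℝ := fun y => eval (fun i => y i) g₂
  refine ⟨twistPerm h τ₂ * twistPerm h τ₁,
    mul_mem (twistPerm_mem_regularNormPerms h g₂) (twistPerm_mem_regularNormPerms h g₁),
    fun r hr => ?_, ?_⟩
  · have h₁ : twist e f τ₁ r = r := twist_eq_self (hg₁R _ ⟨r, hr, rfl⟩)
    have h₂ : twist e f τ₂ r = r := twist_eq_self (hg₂R _ ⟨r, hr, rfl⟩)
    rw [Equiv.Perm.mul_apply, coe_twistPerm, coe_twistPerm, h₁, h₂]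
  · have h₁ : twist e f τ₁ a = planeRotate e f (ratCos t₁) (ratSin t₁) a :=
      twist_eq_planeRotate hg₁a
    have h₂ : twist e f τ₂ (planeRotate e f (ratCos t₁) (ratSin t₁) a) =
        planeRotate e f (ratCos t₂) (ratSin t₂) (planeRotate e f (ratCos t₁) (ratSin t₁) a) :=
      twist_eq_planeRotate (by rw [orthPart_planeRotate h]; exact hg₂a)
    rw [Equiv.Perm.mul_apply, coe_twistPerm, coe_twistPerm, h₁, h₂, planeRotate_planeRotate h, hc,
      hs, hrot]

lemma exists_mem_regularNormPerms_of_notMem_line (hn : 2 ≤ n) {R : Set (𝔼 n)} (hR : R.Finite)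
    {a c : 𝔼 n} (hac : a ≠ c) (hnorm : ‖a‖ = ‖c‖) (hRac : ∀ r ∈ R, r ∉ line[ℝ, a, c]) :
    ∃ φ ∈ regularNormPerms n, (∀ r ∈ R, φ r = r) ∧ φ a = c := by
  have h3 : 3 ≤ finrank ℝ (𝔼 n) := by rw [finrank_euclideanSpace_fin]; omega
  have hRa : ∀ v ∈ (· - a) '' R, v ∉ ℝ ∙ (c - a) := by
    rintro _ ⟨r, hr, rfl⟩ hspan
    obtain ⟨t, ht⟩ := mem_span_singleton.mp hspan
    exact hRac r hr (by rw [← vsub_vadd r a, vadd_left_mem_affineSpan_pair]; exact ⟨t, ht⟩)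
  obtain ⟨e, f, h, hca, hRspan⟩ :=
    exists_orthonormal_pair_mem_span h3 (sub_ne_zero.mpr hac.symm) (hR.image (· - a)) hRa
  refine exists_mem_regularNormPerms_of_orthPart_eq h hR ?_ hnorm fun r hr hra => ?_
  · rw [← sub_eq_zero, ← orthPart_sub, orthPart_eq_zero_iff h, ← neg_mem_iff, neg_sub]
    exact hca
  · exact hRspan _ ⟨r, hr, rfl⟩ ((orthPart_eq_zero_iff h).mp (by rw [orthPart_sub, hra, sub_self]))

lemma infinite_unitSphere (hn : 1 ≤ n) : (unitSphere n).Infinite := by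
  have h01 : (0 : Fin (n + 1)) ≠ 1 := by
    simp [Fin.ext_iff, Nat.mod_eq_of_lt (show 1 < n + 1 by omega)]
  refine infinite_setOf_norm_eq_one (e := EuclideanSpace.single 0 1)
    (f := EuclideanSpace.single 1 1) ?_
  rw [orthonormal_pair_iff]
  simp [EuclideanSpace.inner_single_left, h01]

lemma exists_mem_regularNormPerms_of_notMem (hn : 2 ≤ n) {R : Set (𝔼 n)} (hR : R.Finite)
    {a b : 𝔼 n} (ha : a ∈ unitSphere n) (hb : b ∈ unitSphere n) (haR : a ∉ R) (hbR : b ∉ R) :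
    ∃ φ ∈ regularNormPerms n, (∀ r ∈ R, φ r = r) ∧ φ a = b := by
  -- an intermediate point `c` off all lines through `a` or `b` and a point of `R`
  set bad := {a, b} ∪ ⋃ r ∈ R,
    ({c | ‖c‖ = 1 ∧ c ∈ line[ℝ, a, r]} ∪ {c | ‖c‖ = 1 ∧ c ∈ line[ℝ, b, r]})
  have hbad : bad.Finite := (Set.toFinite _).union <| hR.biUnion fun r hr =>
    (finite_setOf_norm_eq_one_mem_line ha (ne_of_mem_of_not_mem hr haR).symm).union
      (finite_setOf_norm_eq_one_mem_line hb (ne_of_mem_of_not_mem hr hbR).symm)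
  obtain ⟨c, hc, hcbad⟩ := ((infinite_unitSphere (by omega)).sdiff hbad).nonempty
  simp only [bad, Set.mem_union, Set.mem_insert_iff, Set.mem_singleton_iff, Set.mem_iUnion,
    Set.mem_ofPred_eq, not_or, not_exists] at hcbad
  obtain ⟨⟨hca, hcb⟩, hcR⟩ := hcbad
  obtain ⟨φ₁, hφ₁, hφ₁R, hφ₁a⟩ := exists_mem_regularNormPerms_of_notMem_line hn hR (Ne.symm hca)
    (ha.trans hc.symm) fun r hr hrl =>
      (hcR r hr).1 ⟨hc, mem_line_of_mem_line hrl (ne_of_mem_of_not_mem hr haR)⟩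
  obtain ⟨φ₂, hφ₂, hφ₂R, hφ₂c⟩ := exists_mem_regularNormPerms_of_notMem_line hn hR hcb
    (hc.trans hb.symm) fun r hr hrl =>
      (hcR r hr).2 ⟨hc, mem_line_of_mem_line (p := b)
        (by rwa [AffineSubspace.affineSpan_pair_comm]) (ne_of_mem_of_not_mem hr hbR)⟩
  exact ⟨φ₂ * φ₁, mul_mem hφ₂ hφ₁, fun r hr => by simp [hφ₁R r hr, hφ₂R r hr], by simp [hφ₁a, hφ₂c]⟩

lemma exists_mem_regularNormPerms_apply_eq (hn : 2 ≤ n) {m : ℕ} (P Q : Fin m → 𝔼 n)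
    (hP : ∀ j, P j ∈ unitSphere n) (hQ : ∀ j, Q j ∈ unitSphere n)
    (hPinj : Function.Injective P) (hQinj : Function.Injective Q) :
    ∃ φ ∈ regularNormPerms n, ∀ j, φ (P j) = Q j := by
  induction m with
  | zero => exact ⟨1, one_mem _, finZeroElim⟩
  | succ m ih =>
    obtain ⟨φ, hφ, hφPQ⟩ := ih (Fin.tail P) (Fin.tail Q) (fun j => hP _) (fun j => hQ _)
      (hPinj.comp (Fin.succ_injective _)) (hQinj.comp (Fin.succ_injective _))
    have hφP0 : φ (P 0) ∉ Set.range (Fin.tail Q) := by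
      rintro ⟨j, hj⟩
      rw [← hφPQ j] at hj
      exact Fin.succ_ne_zero j (hPinj (φ.injective hj))
    have hQ0 : Q 0 ∉ Set.range (Fin.tail Q) := fun ⟨j, hj⟩ => Fin.succ_ne_zero j (hQinj hj)
    obtain ⟨ψ, hψ, hψR, hψP⟩ := exists_mem_regularNormPerms_of_notMem hn (Set.finite_range _)
      (mapsTo_unitSphere hφ.1 (hP 0)) (hQ 0) hφP0 hQ0
    refine ⟨ψ * φ, mul_mem hψ hφ, Fin.cases ?_ fun j => ?_⟩
    · simpa using hψP
    · exact (congrArg ψ (hφPQ j)).trans (hψR _ ⟨j, rfl⟩)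

end Transitivity

end

theorem stmt5_general (n : ℕ) (hn : 2 ≤ n) (m : ℕ)
    (P Q : Fin m → EuclideanSpace ℝ (Fin (n + 1)))
    (hP : ∀ j, P j ∈ unitSphere n) (hQ : ∀ j, Q j ∈ unitSphere n)
    (hPinj : Function.Injective P) (hQinj : Function.Injective Q) :
    ∃ φ, IsBirationalDiffeo n φ ∧ ∀ j, φ (P j) = Q j := by
  obtain ⟨φ, hφ, hφPQ⟩ := exists_mem_regularNormPerms_apply_eq hn P Q hP hQ hPinj hQinj
  exact ⟨φ, isBirationalDiffeo_of_mem_regularNormPerms hφ, hφPQ⟩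

/-- for `n ≥ 2`, the group of birational diffeomorphisms of `Sⁿ` acts
infinitely transitively: any `m`-tuple of pairwise distinct points of `Sⁿ` is mapped to
any other such `m`-tuple by a birational diffeomorphism of `Sⁿ`. -/
theorem stmt5 (n : ℕ) (hn : 2 ≤ n) (m : ℕ) (hm : 0 < m)
    (P Q : Fin m → EuclideanSpace ℝ (Fin (n + 1)))
    (hP : ∀ j, P j ∈ unitSphere n) (hQ : ∀ j, Q j ∈ unitSphere n)
    (hPinj : Function.Injective P) (hQinj : Function.Injective Q) :
    ∃ φ, IsBirationalDiffeo n φ ∧ ∀ j, φ (P j) = Q j :=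
  stmt5_general n hn m P Q hP hQ hPinj hQinj
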